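/- Let ν be real, let m ≥ 1 be an integer, and let Ψ₀ : ℂ → ℂ be a smooth function satisfying (L_κ^{ν+mκ} Ψ₀)(z) = (ν + mκ) Ψ₀(z) for all z with 1 + κ|z|² > 0. Then the function Φ = (∇_{ν+κ} ∘ ∇_{ν+2κ} ∘ ⋯ ∘ ∇_{ν+mκ}) Ψ₀ satisfies (L_κ^ν Φ)(z) = (ν(2m+1) + m(m+1)κ) Φ(z) for all z with 1 + κ|z|² > 0. -/

import Mathlib

open Complex MeasureTheory Filter

/-- Wirtinger derivative ∂f/∂z = (1/2)(∂f/∂x − i ∂f/∂y). -/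
noncomputable def wderiv (f : ℂ → ℂ) (z : ℂ) : ℂ :=
  (fderiv ℝ f z 1 - Complex.I * fderiv ℝ f z Complex.I) / 2

/-- Anti-holomorphic Wirtinger derivative ∂f/∂z̄ = (1/2)(∂f/∂x + i ∂f/∂y). -/
noncomputable def wderivBar (f : ℂ → ℂ) (z : ℂ) : ℂ :=
  (fderiv ℝ f z 1 + Complex.I * fderiv ℝ f z Complex.I) / 2

/-- Twisted Laplacian L_κ^ν. -/
noncomputable def twistedLap (κ ν : ℝ) (f : ℂ → ℂ) (z : ℂ) : ℂ :=
  -(((1 + κ * Complex.normSq z : ℝ) : ℂ) ^ 2 * wderiv (wderivBar f) z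
    + (ν : ℂ) * ((1 + κ * Complex.normSq z : ℝ) : ℂ) *
        (z * wderiv f z - (starRingEnd ℂ) z * wderivBar f z)
    - (ν : ℂ) ^ 2 * ((Complex.normSq z : ℝ) : ℂ) * f z)

/-- (∇_α f)(z) = −(1+κ|z|²) ∂f/∂z + α z̄ f(z). -/
noncomputable def nabla (κ α : ℝ) (f : ℂ → ℂ) (z : ℂ) : ℂ :=
  -((1 + κ * Complex.normSq z : ℝ) : ℂ) * wderiv f z + (α : ℂ) * (starRingEnd ℂ) z * f z

/-- (∇*_α f)(z) = (1+κ|z|²) ∂f/∂z̄ + (α−κ) z f(z). -/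
noncomputable def nablaStar (κ α : ℝ) (f : ℂ → ℂ) (z : ℂ) : ℂ :=
  ((1 + κ * Complex.normSq z : ℝ) : ℂ) * wderivBar f z + ((α - κ : ℝ) : ℂ) * z * f z

/-- ∇_{ν+κ} ∘ ∇_{ν+2κ} ∘ ⋯ ∘ ∇_{ν+mκ} (the identity when m = 0). -/
noncomputable def nablaChain (κ : ℝ) : ℕ → ℝ → (ℂ → ℂ) → (ℂ → ℂ)
  | 0, _, f => f
  | m + 1, ν, f => nabla κ (ν + κ) (nablaChain κ m (ν + κ) f)

/-- (D g)(z) = (1+κ|z|²)² ∂g/∂z. -/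
noncomputable def Dop (κ : ℝ) (g : ℂ → ℂ) (z : ℂ) : ℂ :=
  ((1 + κ * Complex.normSq z : ℝ) : ℂ) ^ 2 * wderiv g z

/-- Generalized binomial coefficient C(r,k) for real r. -/
noncomputable def genBinom (r : ℝ) (k : ℕ) : ℝ :=
  (∏ i ∈ Finset.range k, (r - i)) / (Nat.factorial k)

/-- Jacobi polynomial P_j^{(a,b)}(x) with real parameters a, b. -/
noncomputable def jacobiP (a b : ℝ) (j : ℕ) (x : ℝ) : ℝ :=
  ∑ s ∈ Finset.range (j + 1),
    genBinom ((j : ℝ) + a) (j - s) * genBinom ((j : ℝ) + b) s *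
      ((x - 1) / 2) ^ s * ((x + 1) / 2) ^ (j - s)

/-- Pochhammer symbol (a)_n = a(a+1)⋯(a+n−1). -/
noncomputable def risingFactorial (a : ℝ) (n : ℕ) : ℝ :=
  ∏ i ∈ Finset.range n, (a + i)

/-!
The twisted Laplacian factors through the ladder operators in two ways,
`L^ν = ∇*_ν ∇_ν - ν` and `L^ν = ∇_{ν+κ} ∇*_{ν+κ} + ν` (the first one needs `∂∂̄ = ∂̄∂`).
Hence `L^ν ∇_{ν+κ} = ∇_{ν+κ} ∇*_{ν+κ} ∇_{ν+κ} + ν ∇_{ν+κ} = ∇_{ν+κ} (L^{ν+κ} + 2ν + κ)`,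
so `∇_{ν+κ}` maps a `μ`-eigenfunction of `L^{ν+κ}` to a `(μ + 2ν + κ)`-eigenfunction of `L^ν`.
Induction on `m` then adds up `ν + mκ` and the shifts `2(ν + iκ) + κ`, `i < m`.
-/

open ComplexConjugate Topology
open scoped ContDiff

@[fun_prop]
lemma Complex.contDiff_conj {n : WithTop ℕ∞} : ContDiff ℝ n (conj : ℂ → ℂ) :=
  conjCLE.contDiff

section Wirtinger

variable {f g : ℂ → ℂ} {z : ℂ}

lemma wderiv_add (hf : DifferentiableAt ℝ f z) (hg : DifferentiableAt ℝ g z) :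
    wderiv (fun w => f w + g w) z = wderiv f z + wderiv g z := by
  simp only [wderiv, fderiv_fun_add hf hg, add_apply]; ring

lemma wderivBar_add (hf : DifferentiableAt ℝ f z) (hg : DifferentiableAt ℝ g z) :
    wderivBar (fun w => f w + g w) z = wderivBar f z + wderivBar g z := by
  simp only [wderivBar, fderiv_fun_add hf hg, add_apply]; ring

lemma wderiv_mul (hf : DifferentiableAt ℝ f z) (hg : DifferentiableAt ℝ g z) :
    wderiv (fun w => f w * g w) z = wderiv f z * g z + f z * wderiv g z := by
  simp only [wderiv, fderiv_fun_mul hf hg, add_apply, smul_apply, smul_eq_mul]; ring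

lemma wderivBar_mul (hf : DifferentiableAt ℝ f z) (hg : DifferentiableAt ℝ g z) :
    wderivBar (fun w => f w * g w) z = wderivBar f z * g z + f z * wderivBar g z := by
  simp only [wderivBar, fderiv_fun_mul hf hg, add_apply, smul_apply, smul_eq_mul]; ring

lemma wderivBar_neg : wderivBar (fun w => -f w) z = -wderivBar f z := by
  simp only [wderivBar, fderiv_fun_neg, neg_apply]; ring

@[simp] lemma wderiv_const (c : ℂ) : wderiv (fun _ => c) z = 0 := by
  simp [wderiv]

@[simp] lemma wderivBar_const (c : ℂ) : wderivBar (fun _ => c) z = 0 := by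
  simp [wderivBar]

@[simp] lemma wderiv_id' : wderiv (fun w => w) z = 1 := by
  simp [wderiv]

@[simp] lemma wderivBar_id' : wderivBar (fun w => w) z = 0 := by
  simp [wderivBar]

lemma fderiv_conj_apply (c : ℂ) : fderiv ℝ (fun w => conj w) z c = conj c := by
  rw [show (fun w => conj w) = (conjCLE : ℂ → ℂ) from rfl, conjCLE.fderiv]
  rfl

@[simp] lemma wderiv_conj : wderiv (fun w => conj w) z = 0 := by
  simp [wderiv, fderiv_conj_apply]

@[simp] lemma wderivBar_conj : wderivBar (fun w => conj w) z = 1 := by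
  simp [wderivBar, fderiv_conj_apply]

end Wirtinger

section OneAddMulNormSq

variable {κ : ℝ} {z : ℂ}

lemma ofReal_one_add_mul_normSq (κ : ℝ) (w : ℂ) :
    ((1 + κ * Complex.normSq w : ℝ) : ℂ) = 1 + κ * (w * conj w) := by
  push_cast; rw [Complex.mul_conj]

@[fun_prop]
lemma contDiff_one_add_mul_normSq {n : WithTop ℕ∞} :
    ContDiff ℝ n (fun w : ℂ => ((1 + κ * Complex.normSq w : ℝ) : ℂ)) := by
  simp only [ofReal_one_add_mul_normSq]; fun_prop

@[fun_prop]
lemma differentiableAt_one_add_mul_normSq :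
    DifferentiableAt ℝ (fun w : ℂ => ((1 + κ * Complex.normSq w : ℝ) : ℂ)) z :=
  (contDiff_one_add_mul_normSq (n := 1)).differentiable one_ne_zero z

lemma wderiv_one_add_mul_normSq :
    wderiv (fun w => ((1 + κ * Complex.normSq w : ℝ) : ℂ)) z = κ * conj z := by
  simp (disch := fun_prop) only [ofReal_one_add_mul_normSq, wderiv_add, wderiv_mul, wderiv_const,
    wderiv_id', wderiv_conj]
  ring

lemma wderivBar_one_add_mul_normSq :
    wderivBar (fun w => ((1 + κ * Complex.normSq w : ℝ) : ℂ)) z = κ * z := by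
  simp (disch := fun_prop) only [ofReal_one_add_mul_normSq, wderivBar_add, wderivBar_mul,
    wderivBar_const, wderivBar_id', wderivBar_conj]
  ring

end OneAddMulNormSq

section Smoothness

variable {f : ℂ → ℂ} {m n : WithTop ℕ∞}

lemma ContDiff.wderiv (hf : ContDiff ℝ n f) (hmn : m + 1 ≤ n) : ContDiff ℝ m (wderiv f) :=
  have hDf := hf.fderiv_right hmn
  ((hDf.clm_apply contDiff_const).sub
    (contDiff_const.mul (hDf.clm_apply contDiff_const))).div_const 2

lemma ContDiff.wderivBar (hf : ContDiff ℝ n f) (hmn : m + 1 ≤ n) : ContDiff ℝ m (wderivBar f) :=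
  have hDf := hf.fderiv_right hmn
  ((hDf.clm_apply contDiff_const).add
    (contDiff_const.mul (hDf.clm_apply contDiff_const))).div_const 2

end Smoothness

section SecondDerivatives

variable {f : ℂ → ℂ} {z : ℂ}

lemma fderiv_wderiv_apply (hf : ContDiff ℝ 2 f) (c : ℂ) :
    fderiv ℝ (wderiv f) z c
      = (fderiv ℝ (fderiv ℝ f) z c 1 - I * fderiv ℝ (fderiv ℝ f) z c I) / 2 := by
  have hD := ((hf.fderiv_right (m := 1) le_rfl).differentiable one_ne_zero z).hasFDerivAt
  have hw : wderiv f = fun w => 2⁻¹ * (fderiv ℝ f w 1 - I * fderiv ℝ f w I) := by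
    funext w; rw [wderiv, div_eq_inv_mul]
  rw [hw, (((hD.clm_apply (hasFDerivAt_const 1 z)).fun_sub
    ((hD.clm_apply (hasFDerivAt_const I z)).const_mul I)).const_mul 2⁻¹).fderiv]
  simp [div_eq_inv_mul, mul_sub]

lemma fderiv_wderivBar_apply (hf : ContDiff ℝ 2 f) (c : ℂ) :
    fderiv ℝ (wderivBar f) z c
      = (fderiv ℝ (fderiv ℝ f) z c 1 + I * fderiv ℝ (fderiv ℝ f) z c I) / 2 := by
  have hD := ((hf.fderiv_right (m := 1) le_rfl).differentiable one_ne_zero z).hasFDerivAt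
  have hw : wderivBar f = fun w => 2⁻¹ * (fderiv ℝ f w 1 + I * fderiv ℝ f w I) := by
    funext w; rw [wderivBar, div_eq_inv_mul]
  rw [hw, (((hD.clm_apply (hasFDerivAt_const 1 z)).fun_add
    ((hD.clm_apply (hasFDerivAt_const I z)).const_mul I)).const_mul 2⁻¹).fderiv]
  simp [div_eq_inv_mul, mul_add]

lemma wderiv_wderivBar_comm (hf : ContDiff ℝ 2 f) :
    wderiv (wderivBar f) z = wderivBar (wderiv f) z := by
  have hsymm := (hf.contDiffAt (x := z)).isSymmSndFDerivAt (by simp) 1 I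
  simp only [wderiv, wderivBar, fderiv_wderiv_apply hf, fderiv_wderivBar_apply hf, hsymm]
  ring

end SecondDerivatives

section Factorization

variable {κ ν : ℝ} {f g : ℂ → ℂ} {z : ℂ}

lemma twistedLap_eq_nablaStar_nabla (hf : ContDiff ℝ 2 f) :
    twistedLap κ ν f z = nablaStar κ ν (nabla κ ν f) z - ν * f z := by
  have hf1 : Differentiable ℝ f := hf.differentiable two_ne_zero
  have hf2 : Differentiable ℝ (wderiv f) := (hf.wderiv (m := 1) le_rfl).differentiable one_ne_zero
  unfold twistedLap nablaStar nabla
  simp (disch := fun_prop) only [wderivBar_add, wderivBar_mul, wderivBar_neg, wderivBar_const,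
    wderivBar_one_add_mul_normSq, wderivBar_conj]
  rw [wderiv_wderivBar_comm hf]
  simp only [ofReal_one_add_mul_normSq, Complex.normSq_eq_conj_mul_self]
  push_cast
  ring

lemma twistedLap_eq_nabla_nablaStar (hg : DifferentiableAt ℝ g z)
    (hg' : DifferentiableAt ℝ (wderivBar g) z) :
    twistedLap κ ν g z = nabla κ (ν + κ) (nablaStar κ (ν + κ) g) z + ν * g z := by
  unfold twistedLap nablaStar nabla
  -- `mul_assoc` turns `c * w * g w` into `c * (w * g w)`; otherwise the factor `fun w => c * w`
  -- is eta-reduced to `HMul.hMul c`, which the product rule does not match.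
  simp (disch := fun_prop) only [mul_assoc, wderiv_add, wderiv_mul, wderiv_const,
    wderiv_one_add_mul_normSq, wderiv_id']
  simp only [ofReal_one_add_mul_normSq, Complex.normSq_eq_conj_mul_self]
  push_cast
  ring

end Factorization

section Ladder

variable {κ α ν : ℝ} {f g : ℂ → ℂ} {z : ℂ}

lemma ContDiff.nabla {m n : WithTop ℕ∞} (hf : ContDiff ℝ n f) (hmn : m + 1 ≤ n) :
    ContDiff ℝ m (nabla κ α f) := by
  have := hf.wderiv hmn
  have := hf.of_le (le_self_add.trans hmn)
  unfold _root_.nabla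
  fun_prop

lemma Filter.EventuallyEq.nabla_eq (h : f =ᶠ[𝓝 z] g) : nabla κ α f z = nabla κ α g z := by
  simp only [nabla, wderiv, h.fderiv_eq, h.eq_of_nhds]

lemma nabla_const_mul (c : ℂ) (hf : DifferentiableAt ℝ f z) :
    nabla κ α (fun w => c * f w) z = c * nabla κ α f z := by
  simp (disch := fun_prop) only [nabla, wderiv_mul, wderiv_const]
  ring

lemma twistedLap_nabla_of_eventually_eq (hf : ContDiff ℝ 3 f) {μ : ℂ}
    (hμ : ∀ᶠ w in 𝓝 z, twistedLap κ (ν + κ) f w = μ * f w) :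
    twistedLap κ ν (nabla κ (ν + κ) f) z = (μ + (2 * ν + κ : ℝ)) * nabla κ (ν + κ) f z := by
  have hf2 : ContDiff ℝ 2 f := hf.of_le (by norm_num)
  have hg : ContDiff ℝ 2 (nabla κ (ν + κ) f) := hf.nabla (by norm_num)
  have hstar :
      nablaStar κ (ν + κ) (nabla κ (ν + κ) f) =ᶠ[𝓝 z] fun w => (μ + (ν + κ : ℝ)) * f w :=
    hμ.mono fun w hw => by
      dsimp only
      rw [add_mul, ← hw, twistedLap_eq_nablaStar_nabla hf2]
      ring
  rw [twistedLap_eq_nabla_nablaStar (hg.differentiable two_ne_zero z)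
      ((hg.wderivBar (m := 1) (by norm_num)).differentiable one_ne_zero z),
    hstar.nabla_eq, nabla_const_mul _ (hf2.differentiable two_ne_zero z)]
  push_cast
  ring

end Ladder

lemma ContDiff.nablaChain {f : ℂ → ℂ} (hf : ContDiff ℝ ∞ f) (κ : ℝ) (m : ℕ) (ν : ℝ) :
    ContDiff ℝ ∞ (nablaChain κ m ν f) := by
  induction m generalizing ν with
  | zero => exact hf
  | succ m ih => exact (ih (ν + κ)).nabla (by simp)

lemma isOpen_setOf_one_add_mul_normSq_pos (κ : ℝ) :
    IsOpen {z : ℂ | 0 < 1 + κ * Complex.normSq z} :=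
  isOpen_lt continuous_const (by fun_prop)

lemma twistedLap_nablaChain {κ : ℝ} {f : ℂ → ℂ} (hf : ContDiff ℝ ∞ f) (m : ℕ) (ν : ℝ)
    (hf_eigen : ∀ z : ℂ, 0 < 1 + κ * Complex.normSq z →
      twistedLap κ (ν + m * κ) f z = ((ν + m * κ : ℝ) : ℂ) * f z)
    (z : ℂ) (hz : 0 < 1 + κ * Complex.normSq z) :
    twistedLap κ ν (nablaChain κ m ν f) z
      = ((ν * (2 * m + 1) + m * (m + 1) * κ : ℝ) : ℂ) * nablaChain κ m ν f z := by
  induction m generalizing ν z with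
  | zero => simpa [nablaChain] using hf_eigen z hz
  | succ m ih =>
    have hprev : ∀ᶠ w in 𝓝 z, twistedLap κ (ν + κ) (nablaChain κ m (ν + κ) f) w
        = (((ν + κ) * (2 * m + 1) + m * (m + 1) * κ : ℝ) : ℂ) * nablaChain κ m (ν + κ) f w := by
      filter_upwards [(isOpen_setOf_one_add_mul_normSq_pos κ).mem_nhds hz] with w hw
      refine ih (ν + κ) (fun w hw => ?_) w hw
      have hshift : ν + κ + m * κ = ν + (m + 1 : ℕ) * κ := by push_cast; ring
      rw [hshift]
      exact hf_eigen w hw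
    have hsmooth : ContDiff ℝ 3 (nablaChain κ m (ν + κ) f) :=
      (hf.nablaChain κ m (ν + κ)).of_le (WithTop.coe_le_coe.2 le_top)
    rw [nablaChain, twistedLap_nabla_of_eventually_eq hsmooth hprev]
    push_cast
    ring

theorem stmt4_general (κ ν : ℝ) (m : ℕ) (Ψ₀ : ℂ → ℂ)
    (hΨ : ContDiff ℝ (⊤ : ℕ∞) Ψ₀)
    (h0 : ∀ z : ℂ, 0 < 1 + κ * Complex.normSq z →
      twistedLap κ (ν + m * κ) Ψ₀ z = ((ν + m * κ : ℝ) : ℂ) * Ψ₀ z) :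
    ∀ z : ℂ, 0 < 1 + κ * Complex.normSq z →
      twistedLap κ ν (nablaChain κ m ν Ψ₀) z
        = ((ν * (2 * m + 1) + m * (m + 1) * κ : ℝ) : ℂ) * nablaChain κ m ν Ψ₀ z :=
  twistedLap_nablaChain hΨ m ν h0

theorem stmt4 (κ ν : ℝ) (m : ℕ) (hm : 1 ≤ m) (Ψ₀ : ℂ → ℂ)
    (hΨ : ContDiff ℝ (⊤ : ℕ∞) Ψ₀)
    (h0 : ∀ z : ℂ, 0 < 1 + κ * Complex.normSq z →
      twistedLap κ (ν + m * κ) Ψ₀ z = ((ν + m * κ : ℝ) : ℂ) * Ψ₀ z) :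
    ∀ z : ℂ, 0 < 1 + κ * Complex.normSq z →
      twistedLap κ ν (nablaChain κ m ν Ψ₀) z
        = ((ν * (2 * m + 1) + m * (m + 1) * κ : ℝ) : ℂ) * nablaChain κ m ν Ψ₀ z :=
  stmt4_general κ ν m Ψ₀ hΨ h0
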